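/- arXiv:2311.12697 — 2 statements merged into one kernel-verified Lean document; each statement's English description precedes it below -/
import Mathlib

section
/- Let m ≥ n be positive integers with Euclidean data m = k₀n + s₁, n = k₁s₁ + s₂, …, and weighted Fibonacci sequence F_l. Suppose t_min := m − δ − s < s_{l+1} where δ = max{n, (k₀−1)n}, l < d+1 is odd, 0 < s_{l+1} < m/2 and 0 ≤ s < s_{l+1}. Then l = 1 if k₀ = 1 and l = −1 if k₀ ≥ 2, and in either case F_l·(m − δ) + s_{l+1} = n. -/
/-- with the Euclidean data of `(m,n)` (`m ≥ n`), the weighted Fibonacci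
sequence `F` (indexed by `ℤ`, with `F₋₁ = 0`, `F₀ = 1`), `δ = max{n, (k₀-1)n}` with
`k₀ = m / n`: if there is `0 ≤ s < s_{l+1}` with `t_min = m - δ - s < s_{l+1}`, `l < d+1`
odd, `0 < s_{l+1} < m/2`, then `l = 1` when `k₀ = 1` and `l = -1` when `k₀ ≥ 2`, and in
either case `F_l (m - δ) + s_{l+1} = n`. -/
theorem statement16 (m n : ℕ) (hn : 0 < n) (hmn : n ≤ m)
    (s : ℤ → ℕ) (F : ℤ → ℕ) (d : ℕ)
    (hs0 : s 0 = n) (hs1 : s 1 = m % n)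
    (hrec : ∀ i : ℕ, (i : ℤ) ≤ (d : ℤ) → s ((i : ℤ) + 2) = s i % s ((i : ℤ) + 1))
    (hpos : ∀ i : ℕ, (i : ℤ) ≤ (d : ℤ) + 1 → 0 < s i)
    (hzero : s ((d : ℤ) + 2) = 0)
    (hFm1 : F (-1) = 0) (hF0 : F 0 = 1)
    (hFrec : ∀ j : ℕ, (j : ℤ) + 1 ≤ (d : ℤ) + 1 →
      F ((j : ℤ) + 1) = (s j / s ((j : ℤ) + 1)) * F j + F ((j : ℤ) - 1))
    (δ : ℕ) (hδ : δ = max n ((m / n - 1) * n))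
    (l : ℤ) (hlodd : Odd l) (hlge : -1 ≤ l) (hllt : l < (d : ℤ) + 1)
    (hspos : 0 < s (l + 1)) (hshalf : 2 * s (l + 1) < m)
    (sv : ℕ) (hsv : sv < s (l + 1)) (htmin : m - δ - sv < s (l + 1)) :
    ((m / n = 1 → l = 1) ∧ (2 ≤ m / n → l = -1)) ∧
    F l * (m - δ) + s (l + 1) = n := by
  have hd0 : (0:ℤ) ≤ (d:ℤ) := Int.ofNat_nonneg d
  have hs1lt : s 1 < n := by rw [hs1]; exact Nat.mod_lt _ hn
  -- strict decrease
  have hstep : ∀ i : ℕ, (i:ℤ) + 1 ≤ (d:ℤ) + 1 → s ((i:ℤ)+1) < s (i:ℤ) := by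
    intro i hi
    cases i with
    | zero => simpa [hs0] using hs1lt
    | succ j =>
      have hj : (j:ℤ) ≤ (d:ℤ) := by push_cast at hi; omega
      have h1 : s ((j:ℤ)+2) = s (j:ℤ) % s ((j:ℤ)+1) := hrec j hj
      have h2 : 0 < s ((j:ℤ)+1) := by
        have := hpos (j+1) (by push_cast; omega)
        push_cast at this; exact this
      have h3 : s ((j:ℤ)+2) < s ((j:ℤ)+1) := by
        rw [h1]; exact Nat.mod_lt _ h2
      have e1 : ((j+1:ℕ):ℤ) + 1 = (j:ℤ) + 2 := by push_cast; ring
      have e2 : ((j+1:ℕ):ℤ) = (j:ℤ) + 1 := by push_cast; ring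
      rw [e1, e2]; exact h3
  -- antitone
  have hanti : ∀ j : ℕ, (j:ℤ) ≤ (d:ℤ) + 1 → ∀ i : ℕ, i ≤ j → s (j:ℤ) ≤ s (i:ℤ) := by
    intro j
    induction j with
    | zero => intro _ i hi; interval_cases i; exact le_refl _
    | succ j ih =>
      intro hj i hi
      rcases Nat.eq_or_lt_of_le hi with h | h
      · rw [h]
      · have h1 := hstep j (by push_cast at hj ⊢; omega)
        have h2 := ih (by push_cast at hj ⊢; omega) i (by omega)
        have e2 : ((j+1:ℕ):ℤ) = (j:ℤ) + 1 := by push_cast; ring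
        rw [e2]; exact le_trans (le_of_lt h1) h2
  -- sum inequality
  have hsum : ∀ i : ℕ, (i:ℤ) ≤ (d:ℤ) → s ((i:ℤ)+1) + s ((i:ℤ)+2) ≤ s (i:ℤ) := by
    intro i hi
    have h1 : s ((i:ℤ)+2) = s (i:ℤ) % s ((i:ℤ)+1) := hrec i hi
    have hp1 : 0 < s ((i:ℤ)+1) := by
      have := hpos (i+1) (by push_cast; omega)
      push_cast at this; exact this
    have hle : s ((i:ℤ)+1) ≤ s (i:ℤ) := le_of_lt (hstep i (by omega))
    have hq : 1 ≤ s (i:ℤ) / s ((i:ℤ)+1) := (Nat.one_le_div_iff hp1).2 hle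
    have h5 : s ((i:ℤ)+1) ≤ s (i:ℤ) / s ((i:ℤ)+1) * s ((i:ℤ)+1) := by
      calc s ((i:ℤ)+1) = 1 * s ((i:ℤ)+1) := (one_mul _).symm
        _ ≤ s (i:ℤ) / s ((i:ℤ)+1) * s ((i:ℤ)+1) := Nat.mul_le_mul_right _ hq
    have h6 : s (i:ℤ) / s ((i:ℤ)+1) * s ((i:ℤ)+1) + s (i:ℤ) % s ((i:ℤ)+1) = s (i:ℤ) :=
      Nat.div_add_mod' _ _
    omega
  have hkey : m - δ < 2 * s (l + 1) := by omega
  have hk1 : 1 ≤ m / n := (Nat.one_le_div_iff hn).2 hmn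
  have hm := Nat.div_add_mod m n
  rcases (by omega : 2 ≤ m / n ∨ m / n = 1) with hk2 | hk2
  · -- k₀ ≥ 2, claim l = -1
    have h2n : 2 * n ≤ n * (m / n) := by
      calc 2 * n = n * 2 := by ring
        _ ≤ n * (m / n) := Nat.mul_le_mul_left _ hk2
    have hδn : δ = n * (m / n) - n := by
      have h1 : (m / n - 1) * n = n * (m / n) - n := by
        rw [Nat.sub_mul, one_mul, mul_comm]
      rw [hδ, h1, Nat.max_eq_right (by omega)]
    have hmδ : m - δ = n + s 1 := by rw [hs1]; omega
    have hl : l = -1 := by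
      by_contra hne
      have hl1 : 1 ≤ l := by
        rcases hlodd with ⟨t, ht⟩; omega
      lift l to ℕ using (by omega : (0:ℤ) ≤ l) with j
      have hj1 : 1 ≤ j := by exact_mod_cast hl1
      have hjd : (j:ℤ) ≤ (d:ℤ) := by omega
      have hA : s ((j+1:ℕ):ℤ) ≤ s ((2:ℕ):ℤ) := by
        refine hanti (j+1) (by push_cast; omega) 2 (by omega)
      have hB : s ((1:ℤ)+1) < s (1:ℤ) := hstep 1 (by push_cast; omega)
      have e1 : ((j+1:ℕ):ℤ) = (j:ℤ) + 1 := by push_cast; ring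
      have e2 : ((2:ℕ):ℤ) = (1:ℤ)+1 := by norm_num
      rw [e1, e2] at hA
      have : m - δ < 2 * s ((j:ℤ)+1) := hkey
      omega
    subst hl
    refine ⟨⟨fun h => by omega, fun _ => rfl⟩, ?_⟩
    norm_num [hFm1, hs0]
  · -- k₀ = 1, claim l = 1
    have hδn : δ = n := by rw [hδ, hk2]; simp
    rw [hk2, mul_one] at hm
    have hmδ : m - δ = s 1 := by rw [hs1]; omega
    have hl : l = 1 := by
      rcases (by rcases hlodd with ⟨t, ht⟩; omega : l = -1 ∨ l = 1 ∨ 3 ≤ l) with h | h | h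
      · exfalso
        rw [h] at hkey hshalf
        norm_num [hs0] at hkey hshalf
        omega
      · exact h
      · exfalso
        lift l to ℕ using (by omega : (0:ℤ) ≤ l) with j
        have hj3 : 3 ≤ j := by exact_mod_cast h
        have hjd : (j:ℤ) ≤ (d:ℤ) := by omega
        have hA := hsum 1 (by push_cast; omega)
        have hB := hsum 2 (by push_cast; omega)
        have hC := hstep 3 (by push_cast; omega)
        have hD : s ((j+1:ℕ):ℤ) ≤ s ((4:ℕ):ℤ) :=
          hanti (j+1) (by push_cast; omega) 4 (by omega)
        have e1 : ((j+1:ℕ):ℤ) = (j:ℤ) + 1 := by push_cast; ring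
        rw [e1] at hD
        norm_num at hA hB hC hD
        have : m - δ < 2 * s ((j:ℤ)+1) := hkey
        omega
    subst hl
    have hF1 := hFrec 0 (by push_cast; omega)
    have hs2 := hrec 0 hd0
    norm_num [hF0, hFm1, hs0] at hF1 hs2
    refine ⟨⟨fun _ => rfl, fun h => by omega⟩, ?_⟩
    norm_num [hF1, hs2, hmδ, hs1]
    exact Nat.div_add_mod' n (m % n)
end

section
/- Let Λ be a finite dimensional algebra, M a generator, X a Λ-module, and g: M_X → X a right minimal add(M)-approximation. Then g is surjective, and for every n ≥ 1 the n-th syzygy of Hom_Λ(M,X) over End_Λ(M) is isomorphic to Hom_Λ(M, Ω^n_M(X)), where Ω_M(X) = ker g. -/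
/-! Since `M` is a generator, `Hom(M, -)` is faithful and every `add M`-approximation is
surjective. On `add M` the functor `Hom(M, -)` is moreover full with projective values, and it is
left exact; so it carries a right minimal `add M`-approximation `g : M_X ⟶ X` to a projective
cover of `Hom(M, X)` with kernel `Hom(M, Ω_M X)`. Induction on `n` and the uniqueness of
projective covers finish the proof. -/

open CategoryTheory CategoryTheory.Limits Opposite

universe u

namespace Rigidity

variable (Λ : Type u) [Ring Λ]

/-- `X` belongs to `add M`: it is a direct summand of a finite direct sum of copies of `M`. -/
def InAdd (M X : ModuleCat.{u} Λ) : Prop :=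
  ∃ (r : ℕ) (Y : ModuleCat.{u} Λ), Nonempty ((X ⊞ Y) ≅ ⨁ (fun _ : Fin r => M))

/-- An indecomposable object. -/
def Indec (X : ModuleCat.{u} Λ) : Prop :=
  ¬ IsZero X ∧ ∀ A B : ModuleCat.{u} Λ, Nonempty (X ≅ A ⊞ B) → IsZero A ∨ IsZero B

/-- A generator-cogenerator: `add M` contains the regular module and all
finitely generated injective modules. -/
def IsGenCogen (M : ModuleCat.{u} Λ) : Prop :=
  InAdd Λ M (ModuleCat.of Λ Λ) ∧
  ∀ I : ModuleCat.{u} Λ, Module.Finite Λ I → Injective I → InAdd Λ M I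

/-- `g : A ⟶ X` is a right minimal `add M`-approximation. -/
def IsRMApprox (M : ModuleCat.{u} Λ) {A X : ModuleCat.{u} Λ} (g : A ⟶ X) : Prop :=
  InAdd Λ M A ∧
  (∀ T : ModuleCat.{u} Λ, InAdd Λ M T → ∀ f : T ⟶ X, ∃ h : T ⟶ A, h ≫ g = f) ∧
  (∀ h : A ⟶ A, h ≫ g = g → IsIso h)

/-- `IsMSyzygy M X r W` : `W` is an `r`-th `M`-syzygy `Ω_M^r(X)` of `X`. -/
inductive IsMSyzygy (M : ModuleCat.{u} Λ) : ModuleCat.{u} Λ → ℕ → ModuleCat.{u} Λ → Prop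
  | zero (X : ModuleCat.{u} Λ) : IsMSyzygy M X 0 X
  | succ (X : ModuleCat.{u} Λ) (r : ℕ) (W A : ModuleCat.{u} Λ) (g : A ⟶ W)
      (hW : IsMSyzygy M X r W) (hg : IsRMApprox Λ M g) :
      IsMSyzygy M X (r + 1) (kernel g)

/-- The `M`-dimension of `X` is at most `r`. -/
def MdimLE (M X : ModuleCat.{u} Λ) (r : ℕ) : Prop :=
  ∃ W : ModuleCat.{u} Λ, IsMSyzygy Λ M X r W ∧ InAdd Λ M W

/-- projective dimension at most `r`, via a length `r` projective resolution. -/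
def ProjDimLE (A : Type u) [Ring A] (N : ModuleCat.{u} A) (r : ℕ) : Prop :=
  ∃ (P : ℕ → ModuleCat.{u} A) (d : ∀ i : ℕ, P (i + 1) ⟶ P i) (f : P 0 ⟶ N),
    (∀ i, Projective (P i)) ∧ (∀ i, r < i → IsZero (P i)) ∧ Epi f ∧
    (∃ w : d 0 ≫ f = 0, (ShortComplex.mk (d 0) f w).Exact) ∧
    (∀ i, ∃ w : d (i + 1) ≫ d i = 0, (ShortComplex.mk (d (i + 1)) (d i) w).Exact)

/-- global dimension at most `r`. -/
def GldimLE (A : Type u) [Ring A] (r : ℕ) : Prop :=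
  ∀ N : ModuleCat.{u} A, ProjDimLE A N r

/-- the global dimension, as an element of `ℕ∞`. -/
noncomputable def gldim (A : Type u) [Ring A] : ℕ∞ :=
  sInf {c : ℕ∞ | ∃ r : ℕ, c = (r : ℕ∞) ∧ GldimLE A r}

/-- dominant dimension at least `r`: there is an exact sequence
`0 → A → I^0 → ⋯ → I^(r-1)` with all `I^i` projective-injective. -/
def DomdimGE (A : Type u) [Ring A] (r : ℕ) : Prop :=
  ∃ (I : ℕ → ModuleCat.{u} A) (f : ModuleCat.of A A ⟶ I 0) (g : ∀ i : ℕ, I i ⟶ I (i + 1)),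
    Mono f ∧ (∀ i, i < r → Injective (I i) ∧ Projective (I i)) ∧
    (2 ≤ r → ∃ w : f ≫ g 0 = 0, (ShortComplex.mk f (g 0) w).Exact) ∧
    (∀ i, i + 3 ≤ r → ∃ w : g i ≫ g (i + 1) = 0, (ShortComplex.mk (g i) (g (i + 1)) w).Exact)

/-- the dominant dimension, as an element of `ℕ∞`. -/
noncomputable def domdim (A : Type u) [Ring A] : ℕ∞ :=
  sSup {c : ℕ∞ | ∃ r : ℕ, c = (r : ℕ∞) ∧ DomdimGE A r}

/-- the rigidity degree of a module, as an element of `ℕ∞`. -/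
noncomputable def rigDeg [HasExt.{u} (ModuleCat.{u} Λ)] (M : ModuleCat.{u} Λ) : ℕ∞ :=
  sSup {c : ℕ∞ | ∃ r : ℕ, c = (r : ℕ∞) ∧ 0 < r ∧
    ∀ i : ℕ, 1 ≤ i → i ≤ r → Subsingleton (Abelian.Ext M M i)}

/-- the rigidity dimension. -/
noncomputable def rigdim : ℕ∞ :=
  sSup {c : ℕ∞ | ∃ M : ModuleCat.{u} Λ, Module.Finite Λ M ∧ IsGenCogen Λ M ∧
    (∃ r : ℕ, GldimLE (End (op M)) r) ∧ c = domdim (End (op M))}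

/-- An Auslander-Reiten (almost split) sequence. -/
def IsARSeq {X Y Z : ModuleCat.{u} Λ} (f : X ⟶ Y) (g : Y ⟶ Z) : Prop :=
  Mono f ∧ Epi g ∧ (∃ w : f ≫ g = 0, (ShortComplex.mk f g w).Exact) ∧
  Indec Λ X ∧ Indec Λ Z ∧
  (¬ ∃ s : Z ⟶ Y, s ≫ g = 𝟙 Z) ∧
  (∀ (W : ModuleCat.{u} Λ) (h : W ⟶ Z), (¬ ∃ s : Z ⟶ W, s ≫ h = 𝟙 Z) →
    ∃ h' : W ⟶ Y, h' ≫ g = h)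

/-- `X` has composition length `t`. -/
def HasCompLength (X : ModuleCat.{u} Λ) (t : ℕ) : Prop :=
  (∃ c : Fin (t + 1) → Submodule Λ X, StrictMono c ∧ c 0 = ⊥ ∧ c (Fin.last t) = ⊤) ∧
  ∀ r : ℕ, (∃ c : Fin (r + 1) → Submodule Λ X, StrictMono c ∧ c 0 = ⊥ ∧ c (Fin.last r) = ⊤) →
    r ≤ t


/-- `IsSyz A N r W` : `W` is an `r`-th syzygy of `N` over `A`, i.e. obtained by
taking kernels of projective covers `r` times. -/
inductive IsSyz (A : Type u) [Ring A] : ModuleCat.{u} A → ℕ → ModuleCat.{u} A → Prop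
  | zero (N : ModuleCat.{u} A) : IsSyz A N 0 N
  | succ (N : ModuleCat.{u} A) (r : ℕ) (W P : ModuleCat.{u} A) (p : P ⟶ W)
      (hP : Projective P) (hp : Epi p) (hmin : ∀ h : P ⟶ P, h ≫ p = p → IsIso h)
      (hW : IsSyz A N r W) : IsSyz A N (r + 1) (kernel p)

/-- The `End X`-module structure on `unop X ⟶ Y` for `X : Cᵒᵖ` (as in the older Mathlib),
with `r • f = r.unop ≫ f`. -/
instance moduleEndLeftOld {C : Type*} [Category C] [Preadditive C] {X : Cᵒᵖ} {Y : C} :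
    Module (End X) (unop X ⟶ Y) where
  smul r f := r.unop ≫ f
  one_smul _ := Category.id_comp _
  mul_smul _ _ _ := Category.assoc _ _ _
  smul_add _ _ _ := Preadditive.comp_add _ _ _ _ _ _
  smul_zero _ := Limits.comp_zero
  add_smul _ _ _ := Preadditive.add_comp _ _ _ _ _ _
  zero_smul _ := Limits.zero_comp

/-- The preadditive coyoneda functor of the older Mathlib, for `X : Cᵒᵖ`. -/
noncomputable def preadditiveCoyonedaObjOld {C : Type*} [Category C] [Preadditive C] (X : Cᵒᵖ) :
    C ⥤ ModuleCat (End X) where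
  obj Y := ModuleCat.of _ (unop X ⟶ Y)
  map f := ModuleCat.ofHom
    { toFun := fun g => g ≫ f
      map_add' := fun _ _ => Preadditive.add_comp _ _ _ _ _ _
      map_smul' := fun _ _ => Category.assoc _ _ _ }


section RightMinimal

variable {C : Type*} [Category C]

def IsRightMinimal {P N : C} (p : P ⟶ N) : Prop :=
  ∀ h : P ⟶ P, h ≫ p = p → IsIso h

lemma IsRightMinimal.comp_mono {P N N' : C} {p : P ⟶ N} (hp : IsRightMinimal p)
    (i : N ⟶ N') [Mono i] : IsRightMinimal (p ≫ i) :=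
  fun h hh => hp h (by simpa only [← Category.assoc, cancel_mono] using hh)

lemma IsRightMinimal.isIso_factorThru {P P' N : C} [Projective P] [Projective P']
    {p : P ⟶ N} {p' : P' ⟶ N} [Epi p] [Epi p'] (hp : IsRightMinimal p)
    (hp' : IsRightMinimal p') : IsIso (Projective.factorThru p p') := by
  set α := Projective.factorThru p p'
  set β := Projective.factorThru p' p
  have : IsIso (α ≫ β) := hp _ (by simp [α, β])
  have : IsIso (β ≫ α) := hp' _ (by simp [α, β])
  have : Mono α := mono_of_mono α β
  have : IsSplitEpi α := ⟨⟨inv (β ≫ α) ≫ β, by simp⟩⟩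
  exact isIso_of_mono_of_isSplitEpi α

lemma IsRightMinimal.nonempty_kernel_iso [HasZeroMorphisms C] {P P' N : C}
    [Projective P] [Projective P'] {p : P ⟶ N} {p' : P' ⟶ N} [Epi p] [Epi p'] [HasKernel p]
    [HasKernel p'] (hp : IsRightMinimal p) (hp' : IsRightMinimal p') :
    Nonempty (kernel p ≅ kernel p') :=
  have := hp.isIso_factorThru hp'
  ⟨kernelIsoOfEq (Projective.factorThru_comp p p').symm ≪≫ kernelIsIsoComp _ p'⟩

end RightMinimal

/-- Mathlib's instance `Projective (⨁ g)` needs the index type in the universe of morphisms. -/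
lemma projective_biproduct {C : Type*} [Category C] [HasZeroMorphisms C] {J : Type*} (f : J → C)
    [HasBiproduct f] (hf : ∀ j, Projective (f j)) : Projective (⨁ f) where
  factors g e _ := ⟨biproduct.desc fun j => Projective.factorThru (biproduct.ι f j ≫ g) e, by
    ext j
    simp⟩

lemma _root_.CategoryTheory.Functor.hom_ext_of_map_biproduct {C D : Type*} [Category C]
    [Category D] [Preadditive C] [Preadditive D] [HasFiniteBiproducts C] [HasFiniteBiproducts D]
    (F : C ⥤ D) [F.Additive]
    {J : Type} [Finite J] {f : J → C} {Z : D} {φ ψ : F.obj (⨁ f) ⟶ Z}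
    (h : ∀ j, F.map (biproduct.ι f j) ≫ φ = F.map (biproduct.ι f j) ≫ ψ) : φ = ψ := by
  rw [← cancel_epi (F.mapBiproduct f).inv]
  ext j
  simpa only [Functor.mapBiproduct_inv, biproduct.ι_desc_assoc] using h j

section HomFunctor

variable {Λ : Type u} [Ring Λ] {M : ModuleCat.{u} Λ}

local notation "𝓗" => preadditiveCoyonedaObjOld (op M)

instance preadditiveCoyonedaObjOld_additive {C : Type*} [Category C] [Preadditive C]
    (X : Cᵒᵖ) : (preadditiveCoyonedaObjOld X).Additive where
  map_add := by
    intros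
    ext
    exact Preadditive.comp_add _ _ _ _ _ _

open ZeroObject in
lemma inAdd_self : InAdd Λ M M :=
  ⟨1, 0, ⟨(isoBiprodZero (isZero_zero _)).symm ≪≫ (biproductUniqueIso fun _ : Fin 1 => M).symm⟩⟩

lemma InAdd.exists_retract {T : ModuleCat.{u} Λ} (hT : InAdd Λ M T) :
    ∃ r : ℕ, Nonempty (Retract T (⨁ fun _ : Fin r => M)) :=
  let ⟨r, _, ⟨e⟩⟩ := hT
  ⟨r, ⟨{ i := biprod.inl ≫ e.hom, r := e.inv ≫ biprod.fst }⟩⟩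

lemma epi_of_isRMApprox (hgen : InAdd Λ M (ModuleCat.of Λ Λ)) {A X : ModuleCat.{u} Λ}
    {g : A ⟶ X} (hg : IsRMApprox Λ M g) : Epi g := by
  rw [ModuleCat.epi_iff_surjective]
  intro x
  obtain ⟨h, hh⟩ := hg.2.1 _ hgen (ModuleCat.ofHom (LinearMap.toSpanSingleton Λ X x))
  exact ⟨h (1 : Λ), by simpa using congr($hh (1 : Λ))⟩

lemma InAdd.comp_eq_comp {T B C : ModuleCat.{u} Λ} (hT : InAdd Λ M T) {f f' : B ⟶ C}
    (hf : ∀ u : M ⟶ B, u ≫ f = u ≫ f') (u : T ⟶ B) : u ≫ f = u ≫ f' := by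
  obtain ⟨r, ⟨R⟩⟩ := hT.exists_retract
  have : R.r ≫ u ≫ f = R.r ≫ u ≫ f' :=
    biproduct.hom_ext' _ _ fun j => by simpa only [← Category.assoc] using hf _
  simpa using R.i ≫= this

lemma isSeparator_of_inAdd_regular (hgen : InAdd Λ M (ModuleCat.of Λ Λ)) : IsSeparator M := by
  rw [isSeparator_def]
  intro B C f f' hf
  ext b
  simpa using congr($(hgen.comp_eq_comp hf (ModuleCat.ofHom (LinearMap.toSpanSingleton Λ B b)))
    (1 : Λ))

noncomputable def objSelfIso : (𝓗).obj M ≅ ModuleCat.of (End (op M)) (End (op M)) :=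
  LinearEquiv.toModuleIso
    ({ toFun := op
       invFun := unop
       map_add' := fun _ _ => rfl
       map_smul' := fun _ _ => rfl
       left_inv := fun _ => rfl
       right_inv := fun _ => rfl } : (𝓗).obj M ≃ₗ[End (op M)] End (op M))

lemma projective_obj_of_inAdd {T : ModuleCat.{u} Λ} (hT : InAdd Λ M T) :
    Projective ((𝓗).obj T) := by
  obtain ⟨r, ⟨R⟩⟩ := hT.exists_retract
  have : Projective ((𝓗).obj M) := Projective.of_iso objSelfIso.symm inferInstance
  have : Projective ((𝓗).obj (⨁ fun _ : Fin r => M)) :=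
    Projective.of_iso ((𝓗).mapBiproduct _).symm (projective_biproduct _ fun _ => this)
  exact (R.map 𝓗).projective

lemma map_apply_id {B : ModuleCat.{u} Λ} (θ : (𝓗).obj M ⟶ (𝓗).obj B) :
    (𝓗).map (θ (𝟙 M)) = θ := by
  ext x
  change x ≫ θ (𝟙 M) = θ x
  have hx : x = (x.op : End (op M)) • (show (𝓗).obj M from 𝟙 M) := (Category.comp_id x).symm
  rw [hx, map_smul]
  rfl

lemma map_surjective_of_inAdd {T B : ModuleCat.{u} Λ} (hT : InAdd Λ M T)
    (θ : (𝓗).obj T ⟶ (𝓗).obj B) : ∃ u : T ⟶ B, (𝓗).map u = θ := by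
  obtain ⟨r, ⟨R⟩⟩ := hT.exists_retract
  let c (j : Fin r) : M ⟶ B := ((𝓗).map (biproduct.ι _ j) ≫ (𝓗).map R.r ≫ θ) (𝟙 M)
  have hc : (𝓗).map (biproduct.desc c) = (𝓗).map R.r ≫ θ :=
    Functor.hom_ext_of_map_biproduct _ fun j => by
      rw [← Functor.map_comp, biproduct.ι_desc, map_apply_id]
  refine ⟨R.i ≫ biproduct.desc c, ?_⟩
  rw [Functor.map_comp, hc, ← Functor.map_comp_assoc, R.retract, CategoryTheory.Functor.map_id,
    Category.id_comp]

lemma nonempty_obj_kernel_iso {A X : ModuleCat.{u} Λ} (g : A ⟶ X) :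
    Nonempty ((𝓗).obj (kernel g) ≅ kernel ((𝓗).map g)) := by
  let S := ShortComplex.mk ((𝓗).map (kernel.ι g)) ((𝓗).map g)
    (by rw [← Functor.map_comp, kernel.condition, Functor.map_zero])
  have : Mono S.f := by
    rw [ModuleCat.mono_iff_injective]
    exact fun _ _ h => (cancel_mono (kernel.ι g)).1 h
  have hS : S.Exact := by
    rw [ShortComplex.moduleCat_exact_iff]
    exact fun x hx => ⟨kernel.lift g x hx, kernel.lift_ι g x hx⟩
  exact ⟨IsLimit.conePointUniqueUpToIso hS.fIsKernel (limit.isLimit _)⟩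

lemma epi_map_of_isRMApprox {A X : ModuleCat.{u} Λ} {g : A ⟶ X} (hg : IsRMApprox Λ M g) :
    Epi ((𝓗).map g) := by
  rw [ModuleCat.epi_iff_surjective]
  exact hg.2.1 M inAdd_self

lemma isRightMinimal_map (hgen : InAdd Λ M (ModuleCat.of Λ Λ)) {A X : ModuleCat.{u} Λ}
    {g : A ⟶ X} (hA : InAdd Λ M A) (hg : IsRightMinimal g) : IsRightMinimal ((𝓗).map g) := by
  intro h hh
  obtain ⟨h, rfl⟩ := map_surjective_of_inAdd hA h
  have := hg h <| (isSeparator_of_inAdd_regular hgen).def _ _ fun u => congr($hh u)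
  infer_instance

theorem nonempty_iso_of_isMSyzygy_of_isSyz (hgen : InAdd Λ M (ModuleCat.of Λ Λ))
    {X W : ModuleCat.{u} Λ} {n : ℕ} (hW : IsMSyzygy Λ M X n W) {Q : ModuleCat (End (op M))}
    (hQ : IsSyz (End (op M)) ((𝓗).obj X) n Q) : Nonempty (Q ≅ (𝓗).obj W) := by
  induction hW generalizing Q with
  | zero => cases hQ; exact ⟨Iso.refl _⟩
  | succ n W A g _ hg ih =>
    obtain _ | ⟨_, V, P, p, _, _, hmin, hV⟩ := hQ
    obtain ⟨φ⟩ := ih hV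
    have := projective_obj_of_inAdd hg.1
    have := epi_map_of_isRMApprox hg
    obtain ⟨κ⟩ := (IsRightMinimal.comp_mono hmin φ.hom).nonempty_kernel_iso
      (isRightMinimal_map hgen hg.1 hg.2.2)
    obtain ⟨ι⟩ := nonempty_obj_kernel_iso g
    exact ⟨(kernelCompMono p φ.hom).symm ≪≫ κ ≪≫ ι.symm⟩

end HomFunctor

theorem statement19_general (Λ : Type u) [Ring Λ]
    (M : ModuleCat.{u} Λ)
    (hgen : InAdd Λ M (ModuleCat.of Λ Λ))
    (X : ModuleCat.{u} Λ)
    (A : ModuleCat.{u} Λ) (g : A ⟶ X) (hg : IsRMApprox Λ M g) :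
    Epi g ∧
    ∀ (n : ℕ), 1 ≤ n → ∀ (W : ModuleCat.{u} Λ), IsMSyzygy Λ M X n W →
      ∀ Q : ModuleCat.{u} (End (op M)),
        IsSyz (End (op M)) ((preadditiveCoyonedaObjOld (op M)).obj X) n Q →
        Nonempty (Q ≅ (preadditiveCoyonedaObjOld (op M)).obj W) :=
  ⟨epi_of_isRMApprox hgen hg,
    fun _ _ _ hW _ hQ => nonempty_iso_of_isMSyzygy_of_isSyz hgen hW hQ⟩

/-- if `M` is a generator and `g : M_X ⟶ X` a right minimal
`add M`-approximation, then `g` is surjective, and for all `n ≥ 1` the `n`-th syzygy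
of `Hom_Λ(M,X)` over `End_Λ(M)` is `Hom_Λ(M, Ω_M^n(X))`. -/
theorem statement19 (k : Type u) [Field k] (Λ : Type u) [Ring Λ] [Algebra k Λ]
    [FiniteDimensional k Λ]
    (M : ModuleCat.{u} Λ) (hMfin : Module.Finite Λ M)
    (hgen : InAdd Λ M (ModuleCat.of Λ Λ))
    (X : ModuleCat.{u} Λ) (hXfin : Module.Finite Λ X)
    (A : ModuleCat.{u} Λ) (g : A ⟶ X) (hg : IsRMApprox Λ M g) :
    Epi g ∧
    ∀ (n : ℕ), 1 ≤ n → ∀ (W : ModuleCat.{u} Λ), IsMSyzygy Λ M X n W →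
      ∀ Q : ModuleCat.{u} (End (op M)),
        IsSyz (End (op M)) ((preadditiveCoyonedaObjOld (op M)).obj X) n Q →
        Nonempty (Q ≅ (preadditiveCoyonedaObjOld (op M)).obj W) :=
  statement19_general Λ M hgen X A g hg

end Rigidity
end
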